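/- Let d ≥ 1, let (S, μ) be a probability space, and let g : S → ℝ^d be integrable with ∫ g dμ = u for some u ∈ ℝ^d. Let η ∈ ℝ^d have nonnegative coordinates (η is independent of the sample, so it is a fixed vector), let m' ∈ ℝ^d, let β ∈ [0,1], and let G ≥ 0 with ‖u‖ ≤ G (Euclidean norm). Then ∫_S ⟨u, (β m' + (1−β) g(s)) ⊙ η⟩ dμ(s) ≥ (1 − β) · (min_i η_i) · ‖u‖² − β G ‖m' ⊙ η‖. (With u = ∇f(w_t), g(s) = ∇f_s(w_t), m' = m_{t−1}, β = β_{1,t}, η = η_t, this is the expected-progress lower bound for methods whose parameter-wise learning rates are independent of the current sample.) -/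
import Mathlib


open BigOperators MeasureTheory

/-- Euclidean (ℓ2) norm of a vector in `ℝ^d`. -/
noncomputable def l2norm {d : ℕ} (x : Fin d → ℝ) : ℝ := Real.sqrt (∑ i, x i ^ 2)

lemma sum_mul_ge_neg_l2norm {d : ℕ} (u v : Fin d → ℝ) :
    -(l2norm u * l2norm v) ≤ ∑ i, u i * v i := by
  have h := Finset.sum_mul_sq_le_sq_mul_sq (Finset.univ) u v
  have hu2 : l2norm u ^ 2 = ∑ i, u i ^ 2 :=
    Real.sq_sqrt (Finset.sum_nonneg fun i _ => sq_nonneg _)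
  have hv2 : l2norm v ^ 2 = ∑ i, v i ^ 2 :=
    Real.sq_sqrt (Finset.sum_nonneg fun i _ => sq_nonneg _)
  have hb : 0 ≤ l2norm u * l2norm v :=
    mul_nonneg (Real.sqrt_nonneg _) (Real.sqrt_nonneg _)
  nlinarith [sq_nonneg ((∑ i, u i * v i) + l2norm u * l2norm v)]

/-- Expected-progress bound when the parameter-wise learning rates `η` are independent
of the current sample: if `∫ g dμ = u`, `η ≥ 0`, `β ∈ [0,1]` and `‖u‖ ≤ G`, then
`∫ ⟨u, (β m' + (1−β) g(s)) ⊙ η⟩ dμ ≥ (1 − β) (min_i η_i) ‖u‖² − β G ‖m' ⊙ η‖`. -/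
theorem expected_inner_momentum_hadamard_lower_bound
    (d : ℕ) (hd : 1 ≤ d)
    {S : Type*} [MeasurableSpace S] (μ : Measure S) [IsProbabilityMeasure μ]
    (g : S → Fin d → ℝ) (hg : Integrable g μ)
    (u : Fin d → ℝ) (hgu : (∫ s, g s ∂μ) = u)
    (η : Fin d → ℝ) (hη : ∀ i, 0 ≤ η i)
    (m' : Fin d → ℝ) (β : ℝ) (hβ0 : 0 ≤ β) (hβ1 : β ≤ 1)
    (G : ℝ) (hG : 0 ≤ G) (hu : l2norm u ≤ G) :
    (∫ s, (∑ i, u i * ((β * m' i + (1 - β) * g s i) * η i)) ∂μ) ≥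
      (1 - β) * (⨅ i, η i) * (∑ i, u i ^ 2) - β * G * l2norm (fun i => m' i * η i) := by
  haveI : Nonempty (Fin d) := ⟨⟨0, hd⟩⟩
  have hgi : ∀ i, Integrable (fun s => g s i) μ := by
    intro i
    exact (ContinuousLinearMap.proj (R := ℝ) (φ := fun _ : Fin d => ℝ) i).integrable_comp hg
  have hgint : ∀ i, (∫ s, g s i ∂μ) = u i := by
    intro i
    rw [← hgu]
    exact Eq.symm (by simpa using ((ContinuousLinearMap.proj (R := ℝ) (φ := fun _ : Fin d => ℝ) i).integral_comp_comm hg).symm)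
  have hFi : ∀ i, Integrable (fun s => u i * ((β * m' i + (1 - β) * g s i) * η i)) μ := by
    intro i
    exact ((((integrable_const (β * m' i)).add ((hgi i).const_mul (1 - β))).mul_const (η i)).const_mul (u i))
  have hint : (∫ s, (∑ i, u i * ((β * m' i + (1 - β) * g s i) * η i)) ∂μ)
      = ∑ i, u i * ((β * m' i + (1 - β) * u i) * η i) := by
    rw [MeasureTheory.integral_finset_sum _ (fun i _ => hFi i)]
    refine Finset.sum_congr rfl fun i _ => ?_
    rw [MeasureTheory.integral_const_mul, MeasureTheory.integral_mul_const,
      MeasureTheory.integral_add (integrable_const _) ((hgi i).const_mul (1 - β)),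
      MeasureTheory.integral_const_mul, MeasureTheory.integral_const_mul, hgint i,
      MeasureTheory.integral_const]
    simp
  rw [hint]
  have hsplit : ∑ i, u i * ((β * m' i + (1 - β) * u i) * η i)
      = β * (∑ i, u i * (m' i * η i)) + (1 - β) * (∑ i, u i ^ 2 * η i) := by
    rw [Finset.mul_sum, Finset.mul_sum, ← Finset.sum_add_distrib]
    refine Finset.sum_congr rfl fun i _ => ?_
    ring
  rw [hsplit]
  have hinf : ∀ i, (⨅ j, η j) ≤ η i := fun i =>
    ciInf_le (Finite.bddBelow_range _) i
  have h1 : (⨅ i, η i) * (∑ i, u i ^ 2) ≤ ∑ i, u i ^ 2 * η i := by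
    rw [Finset.mul_sum]
    refine Finset.sum_le_sum fun i _ => ?_
    rw [mul_comm]
    exact mul_le_mul_of_nonneg_left (hinf i) (sq_nonneg _)
  have h2 : -(G * l2norm (fun i => m' i * η i)) ≤ ∑ i, u i * (m' i * η i) := by
    have := sum_mul_ge_neg_l2norm u (fun i => m' i * η i)
    have hln : 0 ≤ l2norm (fun i => m' i * η i) := Real.sqrt_nonneg _
    nlinarith
  have hb1 : (1 - β) * ((⨅ i, η i) * (∑ i, u i ^ 2)) ≤ (1 - β) * (∑ i, u i ^ 2 * η i) :=
    mul_le_mul_of_nonneg_left h1 (by linarith)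
  have hb2 : β * (-(G * l2norm (fun i => m' i * η i))) ≤ β * (∑ i, u i * (m' i * η i)) :=
    mul_le_mul_of_nonneg_left h2 hβ0
  nlinarith [hb1, hb2]
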